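/- arXiv:2502.14371 — 2 statements merged into one kernel-verified Lean document; each statement's English description precedes it below -/
import Mathlib

section
/- The matching M produced by the round-robin algorithm is 1/2-class-envy-free-up-to-one-item (1/2-CEF1) and non-wasteful: for every pair of distinct classes p, q, either u_p(M) ≥ v_p(M(N_q)) or there exists an item j ∈ M(N_q) with 2·u_p(M) ≥ v_p(M(N_q) \ {j}); and no item is wasted for M. -/
open MeasureTheory ProbabilityTheory Filter
open scoped ENNReal

namespace ClassEF

variable {A B : Type*}

/-- A set of edges of a bipartite graph is a matching if every vertex
appears in at most one edge. -/
def IsMatching (M : Finset (A × B)) : Prop :=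
  (∀ e ∈ M, ∀ e' ∈ M, e.1 = e'.1 → e = e') ∧
  (∀ e ∈ M, ∀ e' ∈ M, e.2 = e'.2 → e = e')

/-- Total weight of a set of edges. -/
def weightSum (w : A → B → ℝ) (M : Finset (A × B)) : ℝ :=
  ∑ e ∈ M, w e.1 e.2

/-- A left vertex is covered by a matching. -/
def coveredA (M : Finset (A × B)) (a : A) : Prop := ∃ b, (a, b) ∈ M

/-- A right vertex is covered by a matching. -/
def coveredB (M : Finset (A × B)) (b : B) : Prop := ∃ a, (a, b) ∈ M

/-- `M` is a maximum-weight matching among the matchings with `r` edges in the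
(complete bipartite) subgraph induced by `A'` and `B'`. -/
def IsMaxMatchingOfSize [DecidableEq A] [DecidableEq B]
    (w : A → B → ℝ) (A' : Finset A) (B' : Finset B) (r : ℕ)
    (M : Finset (A × B)) : Prop :=
  IsMatching M ∧ M ⊆ A' ×ˢ B' ∧ M.card = r ∧
  ∀ M' : Finset (A × B), IsMatching M' → M' ⊆ A' ×ˢ B' → M'.card = r →
    weightSum w M' ≤ weightSum w M

/-- `M` is a maximum-weight matching (among matchings of arbitrary size). -/
def IsMaxWeightMatching (w : A → B → ℝ) (M : Finset (A × B)) : Prop :=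
  IsMatching M ∧ ∀ M' : Finset (A × B), IsMatching M' → weightSum w M' ≤ weightSum w M

open scoped Classical in
/-- The assignment valuation: the maximum total weight of a matching between
the agents of `Np` and the items of `S`. -/
noncomputable def vval [DecidableEq A] [DecidableEq B]
    (w : A → B → ℝ) (Np : Finset A) (S : Finset B) : ℝ :=
  ((Np ×ˢ S).powerset.filter fun M => IsMatching M).sup'
    ⟨∅, by simp [IsMatching]⟩ (weightSum w)

/-- The set of items matched to an agent of `S` under the matching `M`. -/
def bundleOf [DecidableEq A] [DecidableEq B] (M : Finset (A × B)) (S : Finset A) : Finset B :=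
  (M.filter fun e => e.1 ∈ S).image Prod.snd

/-- The total utility received by the agents of `S` under the matching `M`. -/
def classUtil [DecidableEq A] (w : A → B → ℝ) (M : Finset (A × B)) (S : Finset A) : ℝ :=
  ∑ e ∈ M.filter (fun e => e.1 ∈ S), w e.1 e.2

/-- Class envy-freeness. -/
def ClassEnvyFree [DecidableEq A] [DecidableEq B] {k : ℕ}
    (w : A → B → ℝ) (cls : Fin k → Finset A) (M : Finset (A × B)) : Prop :=
  ∀ p q : Fin k, p ≠ q → vval w (cls p) (bundleOf M (cls q)) ≤ classUtil w M (cls p)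

/-- Item `j` is wasted for the matching `M`. -/
def Wasted [DecidableEq A] [DecidableEq B] {k : ℕ}
    (w : A → B → ℝ) (cls : Fin k → Finset A) (M : Finset (A × B)) (j : B) : Prop :=
  ((∀ i : A, (i, j) ∉ M) ∧
    ∃ p, vval w (cls p) (bundleOf M (cls p)) < vval w (cls p) (insert j (bundleOf M (cls p)))) ∨
  (∃ q, j ∈ bundleOf M (cls q) ∧
    vval w (cls q) (bundleOf M (cls q)) = vval w (cls q) ((bundleOf M (cls q)).erase j) ∧
    ∃ p, p ≠ q ∧
      vval w (cls p) (bundleOf M (cls p)) < vval w (cls p) (insert j (bundleOf M (cls p))))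

/-- A matching is non-wasteful if no item is wasted. -/
def NonWasteful [DecidableEq A] [DecidableEq B] {k : ℕ}
    (w : A → B → ℝ) (cls : Fin k → Finset A) (M : Finset (A × B)) : Prop :=
  ∀ j : B, ¬ Wasted w cls M j

/-- `cls` partitions the agents into `k` disjoint nonempty classes. -/
def IsClassPartition {n k : ℕ} (cls : Fin k → Finset (Fin n)) : Prop :=
  (∀ p, (cls p).Nonempty) ∧ (∀ p q : Fin k, p ≠ q → Disjoint (cls p) (cls q)) ∧
  Finset.univ.biUnion cls = (Finset.univ : Finset (Fin n))

/-- The maximum class size. -/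
def maxClassSize {n k : ℕ} (cls : Fin k → Finset (Fin n)) : ℕ :=
  Finset.univ.sup fun p => (cls p).card

/-- The minimum class size. -/
noncomputable def minClassSize {n k : ℕ} (cls : Fin k → Finset (Fin n)) : ℕ :=
  sInf (Set.range fun p => (cls p).card)

/-- Marginal value of the item `j` for the bundle `S` of a class with agent set `Np`. -/
noncomputable def marginalVal [DecidableEq A] [DecidableEq B]
    (w : A → B → ℝ) (Np : Finset A) (S : Finset B) (j : B) : ℝ :=
  vval w Np (insert j S) - vval w Np S

/-- The items remaining once each class `p` holds the bundle `Bu p`. -/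
def remainingItems [Fintype B] [DecidableEq B] {k : ℕ} (Bu : Fin k → Finset B) : Finset B :=
  Finset.univ \ Finset.univ.biUnion Bu

/-- One selection step of class `p` in the round-robin algorithm, acting on the
tuple of current bundles: if some remaining item has positive marginal value,
class `p` adds to its bundle a remaining item of maximum marginal value;
otherwise nothing happens. -/
def ClassStep [Fintype B] [DecidableEq A] [DecidableEq B] {k : ℕ}
    (w : A → B → ℝ) (cls : Fin k → Finset A) (p : Fin k)
    (Bu Bu' : Fin k → Finset B) : Prop :=
  (∃ j ∈ remainingItems Bu,
      0 < marginalVal w (cls p) (Bu p) j ∧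
      (∀ j' ∈ remainingItems Bu,
        marginalVal w (cls p) (Bu p) j' ≤ marginalVal w (cls p) (Bu p) j) ∧
      Bu' = Function.update Bu p (insert j (Bu p))) ∨
  ((∀ j ∈ remainingItems Bu, marginalVal w (cls p) (Bu p) j ≤ 0) ∧ Bu' = Bu)

/-- One round of the round-robin algorithm: the classes `p = 0, …, k-1` perform
their selection steps in increasing order. -/
def RoundStep [Fintype B] [DecidableEq A] [DecidableEq B] {k : ℕ}
    (w : A → B → ℝ) (cls : Fin k → Finset A) (Bu Bu' : Fin k → Finset B) : Prop :=
  ∃ f : Fin (k + 1) → Fin k → Finset B,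
    f 0 = Bu ∧ f (Fin.last k) = Bu' ∧
    ∀ p : Fin k, ClassStep w cls p (f p.castSucc) (f p.succ)

/-- `M` is a possible output of the round-robin algorithm: starting from empty
bundles, rounds are performed until no class assigns positive marginal value to
any remaining item, and `M` is obtained by matching each class `p` with its final
bundle `Bu p` via a maximum-weight matching. -/
def IsRoundRobinOutput [Fintype B] [DecidableEq A] [DecidableEq B] {k : ℕ}
    (w : A → B → ℝ) (cls : Fin k → Finset A) (M : Finset (A × B)) : Prop :=
  ∃ Bu : Fin k → Finset B,
    Relation.ReflTransGen (RoundStep w cls) (fun _ => ∅) Bu ∧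
    (∀ p, ∀ j ∈ remainingItems Bu, marginalVal w (cls p) (Bu p) j ≤ 0) ∧
    IsMatching M ∧
    (∀ p : Fin k, ∀ e ∈ M, e.1 ∈ cls p → e.2 ∈ Bu p) ∧
    (∀ p : Fin k, classUtil w M (cls p) = vval w (cls p) (Bu p))

/-- An `(α,β)`-PDF-bounded distribution on `[0,1]`: it has a density bounded
between `a` and `b` on `[0,1]` and vanishing outside `[0,1]`. -/
def PDFBounded (D : Measure ℝ) (a b : ℝ) : Prop :=
  ∃ f : ℝ → ℝ,
    (∀ x ∈ Set.Icc (0 : ℝ) 1, a ≤ f x ∧ f x ≤ b) ∧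
    (∀ x, x ∉ Set.Icc (0 : ℝ) 1 → f x = 0) ∧
    D = MeasureTheory.volume.withDensity fun x => ENNReal.ofReal (f x)

/-- The reversed exponential distribution `ReExp(λ)`, with density
`λ e^{-λ(1-x)}` on `(-∞, 1]`. -/
noncomputable def reExp (lam : ℝ) : Measure ℝ :=
  MeasureTheory.volume.withDensity fun x =>
    ENNReal.ofReal (if x ≤ 1 then lam * Real.exp (-lam * (1 - x)) else 0)

/-- An acceptable alternating path of length `ℓ` for the threshold `w0`, of the
matching `Mopt`, inside the bipartite graph on right vertex set `S`: it visits
distinct matched left vertices `i 0, …, i (ℓ-1)` and ends in an unmatched right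
vertex `j'`, and all its non-matching edges have weight at least `w0`. -/
def AcceptablePath (w : A → B → ℝ) (S : Finset B)
    (Mopt : Finset (A × B)) (w0 : ℝ) (ℓ : ℕ) : Prop :=
  ∃ hℓ : 0 < ℓ, ∃ (i : Fin ℓ → A) (b : Fin ℓ → B) (j' : B),
    Function.Injective i ∧
    (∀ t, (i t, b t) ∈ Mopt) ∧
    j' ∈ S ∧ (∀ a : A, (a, j') ∉ Mopt) ∧
    (∀ t : Fin ℓ, ∀ ht : (t : ℕ) + 1 < ℓ, w0 ≤ w (i t) (b ⟨(t : ℕ) + 1, ht⟩)) ∧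
    w0 ≤ w (i ⟨ℓ - 1, Nat.sub_lt hℓ Nat.one_pos⟩) j'

/-- An acceptable alternating cycle of length `ℓ` for the threshold `w0`, of the
matching `Mopt`: it visits distinct matched left vertices `i 0, …, i (ℓ-1)` and
all its non-matching edges have weight at least `w0`. -/
def AcceptableCycle (w : A → B → ℝ)
    (Mopt : Finset (A × B)) (w0 : ℝ) (ℓ : ℕ) : Prop :=
  ∃ hℓ : 0 < ℓ, ∃ (i : Fin ℓ → A) (b : Fin ℓ → B),
    Function.Injective i ∧
    (∀ t, (i t, b t) ∈ Mopt) ∧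
    ∀ t : Fin ℓ, w0 ≤ w (i t) (b ⟨((t : ℕ) + 1) % ℓ, Nat.mod_lt _ hℓ⟩)

end ClassEF

namespace ClassEF

section Aux
set_option linter.unusedSectionVars false

variable {A B : Type*} [DecidableEq A] [DecidableEq B]

lemma isMatching_subset {M M' : Finset (A × B)} (h : M' ⊆ M) (hM : IsMatching M) :
    IsMatching M' :=
  ⟨fun e he e' he' hh => hM.1 e (h he) e' (h he') hh,
   fun e he e' he' hh => hM.2 e (h he) e' (h he') hh⟩

lemma isMatching_empty : IsMatching (∅ : Finset (A × B)) := by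
  constructor <;> intro e he <;> simp at he

lemma isMatching_insert {M : Finset (A × B)} (hM : IsMatching M) {i : A} {b : B}
    (hi : i ∉ M.image Prod.fst) (hb : b ∉ M.image Prod.snd) :
    IsMatching (insert (i, b) M) := by
  constructor
  · rintro e he e' he' hh
    simp only [Finset.mem_insert] at he he'
    rcases he with rfl | he <;> rcases he' with rfl | he'
    · rfl
    · exact absurd (Finset.mem_image_of_mem Prod.fst he') (by simpa [← hh] using hi)
    · exact absurd (Finset.mem_image_of_mem Prod.fst he) (by simpa [hh] using hi)
    · exact hM.1 e he e' he' hh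
  · rintro e he e' he' hh
    simp only [Finset.mem_insert] at he he'
    rcases he with rfl | he <;> rcases he' with rfl | he'
    · rfl
    · exact absurd (Finset.mem_image_of_mem Prod.snd he') (by simpa [← hh] using hb)
    · exact absurd (Finset.mem_image_of_mem Prod.snd he) (by simpa [hh] using hb)
    · exact hM.2 e he e' he' hh

lemma mem_itSet {M : Finset (A × B)} {b : B} :
    b ∈ M.image Prod.snd ↔ ∃ a, (a, b) ∈ M := by
  simp only [Finset.mem_image]
  constructor
  · rintro ⟨⟨a, b'⟩, h, rfl⟩; exact ⟨a, h⟩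
  · rintro ⟨a, h⟩; exact ⟨(a, b), h, rfl⟩

lemma mem_agSet {M : Finset (A × B)} {a : A} :
    a ∈ M.image Prod.fst ↔ ∃ b, (a, b) ∈ M := by
  simp only [Finset.mem_image]
  constructor
  · rintro ⟨⟨a', b⟩, h, rfl⟩; exact ⟨b, h⟩
  · rintro ⟨b, h⟩; exact ⟨(a, b), h, rfl⟩

lemma card_itSet {M : Finset (A × B)} (hM : IsMatching M) :
    (M.image Prod.snd).card = M.card :=
  Finset.card_image_of_injOn (fun e he e' he' hh => hM.2 e he e' he' hh)

lemma card_agSet {M : Finset (A × B)} (hM : IsMatching M) :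
    (M.image Prod.fst).card = M.card :=
  Finset.card_image_of_injOn (fun e he e' he' hh => hM.1 e he e' he' hh)

lemma itSet_erase {M : Finset (A × B)} (hM : IsMatching M) {e : A × B} (he : e ∈ M) :
    (M.erase e).image Prod.snd = (M.image Prod.snd).erase e.2 := by
  ext b
  simp only [Finset.mem_image, Finset.mem_erase]
  constructor
  · rintro ⟨a, ⟨hne, haM⟩, rfl⟩
    exact ⟨fun hh => hne (hM.2 a haM e he hh), ⟨a, haM, rfl⟩⟩
  · rintro ⟨hne, a, haM, rfl⟩
    exact ⟨a, ⟨fun hh => hne (by rw [hh]), haM⟩, rfl⟩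

lemma agSet_erase {M : Finset (A × B)} (hM : IsMatching M) {e : A × B} (he : e ∈ M) :
    (M.erase e).image Prod.fst = (M.image Prod.fst).erase e.1 := by
  ext a
  simp only [Finset.mem_image, Finset.mem_erase]
  constructor
  · rintro ⟨x, ⟨hne, haM⟩, rfl⟩
    exact ⟨fun hh => hne (hM.1 x haM e he hh), ⟨x, haM, rfl⟩⟩
  · rintro ⟨hne, x, haM, rfl⟩
    exact ⟨x, ⟨fun hh => hne (by rw [hh]), haM⟩, rfl⟩

lemma weightSum_nonneg {w : A → B → ℝ} (hw : ∀ i b, 0 ≤ w i b) (M : Finset (A × B)) :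
    0 ≤ weightSum w M :=
  Finset.sum_nonneg (fun e _ => hw e.1 e.2)

lemma le_vval {w : A → B → ℝ} {Np : Finset A} {S : Finset B} {M : Finset (A × B)}
    (hM : IsMatching M) (hsub : M ⊆ Np ×ˢ S) :
    weightSum w M ≤ vval w Np S := by
  classical
  refine Finset.le_sup' _ ?_
  simp only [Finset.mem_filter, Finset.mem_powerset]
  exact ⟨hsub, hM⟩

lemma exists_opt (w : A → B → ℝ) (Np : Finset A) (S : Finset B) :
    ∃ M : Finset (A × B), IsMatching M ∧ M ⊆ Np ×ˢ S ∧ weightSum w M = vval w Np S := by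
  classical
  obtain ⟨M, hmem, heq⟩ := Finset.exists_mem_eq_sup'
    (⟨∅, by simp [IsMatching]⟩ :
      (((Np ×ˢ S).powerset.filter fun M => IsMatching M)).Nonempty) (weightSum w)
  simp only [Finset.mem_filter, Finset.mem_powerset] at hmem
  exact ⟨M, hmem.2, hmem.1, heq.symm⟩

lemma vval_nonneg {w : A → B → ℝ} (hw : ∀ i b, 0 ≤ w i b) (Np : Finset A) (S : Finset B) :
    0 ≤ vval w Np S := by
  have := le_vval (w := w) (Np := Np) (S := S) isMatching_empty (by simp)
  simpa [weightSum] using this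

lemma vval_mono (w : A → B → ℝ) (Np : Finset A) {S T : Finset B} (h : S ⊆ T) :
    vval w Np S ≤ vval w Np T := by
  classical
  refine Finset.sup'_le _ _ (fun M hmem => ?_)
  simp only [Finset.mem_filter, Finset.mem_powerset] at hmem
  exact le_vval hmem.2 (hmem.1.trans (Finset.product_subset_product_right h))

lemma vval_empty (w : A → B → ℝ) (Np : Finset A) : vval w Np (∅ : Finset B) = 0 := by
  classical
  apply le_antisymm
  · refine Finset.sup'_le _ _ (fun M hmem => ?_)
    simp only [Finset.mem_filter, Finset.mem_powerset, Finset.product_empty,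
      Finset.subset_empty] at hmem
    simp [hmem.1, weightSum]
  · have := le_vval (w := w) (Np := Np) (S := (∅ : Finset B)) isMatching_empty (by simp)
    simpa [weightSum] using this

end Aux

section Walk

set_option linter.unusedSectionVars false

variable {A B : Type*} [DecidableEq A] [DecidableEq B]

lemma walk : ∀ (N : ℕ) (M1 M2 : Finset (A × B)), M1.card ≤ N → IsMatching M1 → IsMatching M2 →
    ∀ j : B, j ∈ M1.image Prod.snd → j ∉ M2.image Prod.snd →
    ∃ M1' M2' : Finset (A × B), IsMatching M1' ∧ IsMatching M2' ∧
      M1' ∪ M2' = M1 ∪ M2 ∧ M1' ∩ M2' = M1 ∩ M2 ∧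
      ((M1'.image Prod.snd = (M1.image Prod.snd).erase j ∧
        M2'.image Prod.snd = insert j (M2.image Prod.snd)) ∨
       (∃ z ∈ M2.image Prod.snd, z ∉ M1.image Prod.snd ∧
        M1'.image Prod.snd = insert z ((M1.image Prod.snd).erase j) ∧
        M2'.image Prod.snd = insert j ((M2.image Prod.snd).erase z))) := by
  intro N
  induction N with
  | zero =>
    intro M1 M2 hc _ _ j hj _
    interval_cases h : M1.card
    · rw [Finset.card_eq_zero] at h
      subst h; simp at hj
  | succ N ih =>
    intro M1 M2 hc hM1 hM2 j hj hjM2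
    obtain ⟨i0, hij1⟩ := mem_itSet.mp hj
    have hij1M2 : (i0, j) ∉ M2 := fun h => hjM2 (Finset.mem_image_of_mem Prod.snd h)
    by_cases hio : i0 ∈ M2.image Prod.fst
    · -- i0 is matched in M2, to b1
      obtain ⟨b1, hib1⟩ := mem_agSet.mp hio
      have hb1j : b1 ≠ j := fun h => hjM2 (h ▸ Finset.mem_image_of_mem Prod.snd hib1)
      have hib1M1 : (i0, b1) ∉ M1 := fun h =>
        hb1j (congrArg Prod.snd (hM1.1 (i0, b1) h (i0, j) hij1 rfl))
      by_cases hb1 : b1 ∈ M1.image Prod.snd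
      · -- recursive case
        set M1t := M1.erase (i0, j) with hM1t_def
        set M2t := M2.erase (i0, b1) with hM2t_def
        have hM1t : IsMatching M1t := isMatching_subset (Finset.erase_subset _ _) hM1
        have hM2t : IsMatching M2t := isMatching_subset (Finset.erase_subset _ _) hM2
        have hit1 : M1t.image Prod.snd = (M1.image Prod.snd).erase j := itSet_erase hM1 hij1
        have hit2 : M2t.image Prod.snd = (M2.image Prod.snd).erase b1 := itSet_erase hM2 hib1
        have hag1 : M1t.image Prod.fst = (M1.image Prod.fst).erase i0 := agSet_erase hM1 hij1
        have hag2 : M2t.image Prod.fst = (M2.image Prod.fst).erase i0 := agSet_erase hM2 hib1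
        have hb1t : b1 ∈ M1t.image Prod.snd := by
          rw [hit1]; exact Finset.mem_erase.mpr ⟨hb1j, hb1⟩
        have hb1t2 : b1 ∉ M2t.image Prod.snd := by
          rw [hit2]; exact Finset.notMem_erase _ _
        have hcard : M1t.card ≤ N := by
          have h1 := Finset.card_erase_of_mem hij1
          have hpos : 0 < M1.card := Finset.card_pos.mpr ⟨_, hij1⟩
          rw [hM1t_def, h1]
          omega
        obtain ⟨M1s, M2s, hm1s, hm2s, hun, hin, hcase⟩ := ih M1t M2t hcard hM1t hM2t b1 hb1t hb1t2
        -- i0 is not an agent of M1s ∪ M2s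
        have hi0un : i0 ∉ (M1t ∪ M2t).image Prod.fst := by
          rw [Finset.image_union, Finset.mem_union, hag1, hag2]
          simp
        have hi0s1 : i0 ∉ M1s.image Prod.fst := fun h => hi0un (by
          rw [← hun]; exact Finset.mem_of_subset (Finset.image_subset_image
            Finset.subset_union_left) h)
        have hi0s2 : i0 ∉ M2s.image Prod.fst := fun h => hi0un (by
          rw [← hun]; exact Finset.mem_of_subset (Finset.image_subset_image
            Finset.subset_union_right) h)
        -- b1 not an item of M1s, j not an item of M2s
        have hb1s1 : b1 ∉ M1s.image Prod.snd := by
          rcases hcase with ⟨h1, _⟩ | ⟨z, hz2, hz1, h1, _⟩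
          · rw [h1]; exact Finset.notMem_erase _ _
          · rw [h1]
            intro hmem
            rcases Finset.mem_insert.mp hmem with rfl | hmem
            · exact hz1 hb1t
            · exact Finset.notMem_erase _ _ hmem
        have hjs2 : j ∉ M2s.image Prod.snd := by
          have hjt2 : j ∉ M2t.image Prod.snd := by
            rw [hit2]; exact fun h => hjM2 (Finset.mem_of_mem_erase h)
          rcases hcase with ⟨_, h2⟩ | ⟨z, hz2, hz1, _, h2⟩
          · rw [h2]
            intro hmem
            rcases Finset.mem_insert.mp hmem with rfl | hmem
            · exact hb1j rfl
            · exact hjt2 hmem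
          · rw [h2]
            intro hmem
            rcases Finset.mem_insert.mp hmem with rfl | hmem
            · exact hb1j rfl
            · exact hjt2 (Finset.mem_of_mem_erase hmem)
        refine ⟨insert (i0, b1) M1s, insert (i0, j) M2s, isMatching_insert hm1s hi0s1 hb1s1,
          isMatching_insert hm2s hi0s2 hjs2, ?_, ?_, ?_⟩
        · -- union
          have h1 : (i0, j) ∈ M1 := hij1
          have h2 : (i0, b1) ∈ M2 := hib1
          ext e
          rcases eq_or_ne e (i0, j) with rfl | he1
          · simp [h1]
          · rcases eq_or_ne e (i0, b1) with rfl | he2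
            · simp [h2]
            · have : e ∈ M1s ∪ M2s ↔ e ∈ M1t ∪ M2t := by rw [hun]
              simp only [Finset.mem_union] at this
              simp only [Finset.mem_insert, Finset.mem_union, he1, he2, false_or]
              rw [this]
              simp only [hM1t_def, hM2t_def, Finset.mem_erase, he1, he2, true_and,
                ne_eq, not_false_iff]
        · -- intersection
          have hj1' : (i0, j) ∉ insert (i0, b1) M1s := by
            simp only [Finset.mem_insert]
            rintro (h | h)
            · exact hb1j (congrArg Prod.snd h).symm
            · exact hi0s1 (Finset.mem_image_of_mem Prod.fst h)
          have hb2' : (i0, b1) ∉ insert (i0, j) M2s := by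
            simp only [Finset.mem_insert]
            rintro (h | h)
            · exact hb1j (congrArg Prod.snd h)
            · exact hi0s2 (Finset.mem_image_of_mem Prod.fst h)
          ext e
          rcases eq_or_ne e (i0, j) with rfl | he1
          · simp only [Finset.mem_inter, hij1M2, and_false, iff_false]
            exact fun h => hj1' h.1
          · rcases eq_or_ne e (i0, b1) with rfl | he2
            · simp only [Finset.mem_inter, hib1M1, false_and, iff_false]
              exact fun h => hb2' h.2
            · have : e ∈ M1s ∩ M2s ↔ e ∈ M1t ∩ M2t := by rw [hin]
              simp only [Finset.mem_inter] at this
              simp only [Finset.mem_inter, Finset.mem_insert, he1, he2, false_or]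
              rw [this]
              simp only [hM1t_def, hM2t_def, Finset.mem_erase, he1, he2, true_and, ne_eq,
                not_false_iff]
        · -- items
          have him1 : (insert (i0, b1) M1s).image Prod.snd = insert b1 (M1s.image Prod.snd) :=
            Finset.image_insert _ _ _
          have him2 : (insert (i0, j) M2s).image Prod.snd = insert j (M2s.image Prod.snd) :=
            Finset.image_insert _ _ _
          rcases hcase with ⟨h1, h2⟩ | ⟨z, hz2, hz1, h1, h2⟩
          · left
            constructor
            · rw [him1, h1, hit1, Finset.insert_erase (by
                rw [← hit1]; exact hb1t)]
            · rw [him2, h2, hit2,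
                Finset.insert_erase (Finset.mem_image_of_mem Prod.snd hib1)]
          · right
            have hzM2 : z ∈ M2.image Prod.snd := by
              rw [hit2] at hz2; exact Finset.mem_of_mem_erase hz2
            have hzj : z ≠ j := fun h => hjM2 (h ▸ hzM2)
            have hzb1 : z ≠ b1 := by
              rw [hit2] at hz2; exact (Finset.mem_erase.mp hz2).1
            have hzM1 : z ∉ M1.image Prod.snd := by
              intro h
              exact hz1 (by rw [hit1]; exact Finset.mem_erase.mpr ⟨hzj, h⟩)
            refine ⟨z, hzM2, hzM1, ?_, ?_⟩
            · rw [him1, h1, hit1, Finset.insert_comm, Finset.insert_erase (by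
                rw [← hit1]; exact hb1t)]
            · rw [him2, h2, hit2, Finset.erase_right_comm,
                Finset.insert_erase
                  (Finset.mem_erase.mpr ⟨fun h => hzb1 h.symm,
                    Finset.mem_image_of_mem Prod.snd hib1⟩)]
      · -- terminal case (ii) with z = b1
        refine ⟨insert (i0, b1) (M1.erase (i0, j)), insert (i0, j) (M2.erase (i0, b1)),
          ?_, ?_, ?_, ?_, ?_⟩
        · refine isMatching_insert (isMatching_subset (Finset.erase_subset _ _) hM1) ?_ ?_
          · rw [agSet_erase hM1 hij1]; exact Finset.notMem_erase _ _
          · rw [itSet_erase hM1 hij1]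
            exact fun h => hb1 (Finset.mem_of_mem_erase h)
        · refine isMatching_insert (isMatching_subset (Finset.erase_subset _ _) hM2) ?_ ?_
          · rw [agSet_erase hM2 hib1]; exact Finset.notMem_erase _ _
          · rw [itSet_erase hM2 hib1]
            exact fun h => hjM2 (Finset.mem_of_mem_erase h)
        · ext e
          rcases eq_or_ne e (i0, j) with rfl | he1
          · simp [hij1]
          · rcases eq_or_ne e (i0, b1) with rfl | he2
            · simp [hib1]
            · simp [Finset.mem_union, Finset.mem_insert, Finset.mem_erase, he1, he2]
        · ext e
          rcases eq_or_ne e (i0, j) with rfl | he1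
          · simp only [Finset.mem_inter, hij1M2, and_false, iff_false, Finset.mem_insert]
            rintro ⟨h | h, _⟩
            · exact hb1j (congrArg Prod.snd h).symm
            · exact (Finset.mem_erase.mp h).1 rfl
          · rcases eq_or_ne e (i0, b1) with rfl | he2
            · simp only [Finset.mem_inter, hib1M1, false_and, iff_false, Finset.mem_insert]
              rintro ⟨_, h | h⟩
              · exact hb1j (congrArg Prod.snd h)
              · exact (Finset.mem_erase.mp h).1 rfl
            · simp [Finset.mem_inter, Finset.mem_insert, Finset.mem_erase, he1, he2]
        · right
          refine ⟨b1, Finset.mem_image_of_mem Prod.snd hib1, hb1, ?_, ?_⟩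
          · rw [Finset.image_insert, itSet_erase hM1 hij1]
          · rw [Finset.image_insert, itSet_erase hM2 hib1]
    · -- terminal case (i)
      refine ⟨M1.erase (i0, j), insert (i0, j) M2,
        isMatching_subset (Finset.erase_subset _ _) hM1,
        isMatching_insert hM2 hio hjM2, ?_, ?_, ?_⟩
      · ext e
        rcases eq_or_ne e (i0, j) with rfl | he
        · simp [hij1]
        · simp [Finset.mem_union, Finset.mem_insert, Finset.mem_erase, he]
      · ext e
        rcases eq_or_ne e (i0, j) with rfl | he
        · simp [hij1M2]
        · simp [Finset.mem_inter, Finset.mem_insert, Finset.mem_erase, he]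
      · left
        exact ⟨itSet_erase hM1 hij1, Finset.image_insert _ _ _⟩

end Walk

section ExchCore

set_option linter.unusedSectionVars false

variable {A B : Type*} [DecidableEq A] [DecidableEq B]

lemma exists_not_mem_of_card_lt {α : Type*} {s t : Finset α} (h : s.card < t.card) :
    ∃ e ∈ t, e ∉ s := by
  by_contra hc; push_neg at hc
  exact absurd (Finset.card_le_card hc) (by omega)

lemma exchCore : ∀ (N : ℕ) (M1 M2 : Finset (A × B)), M2.card ≤ N → IsMatching M1 →
    IsMatching M2 → M2.card < M1.card →
    ∃ (y : B) (M1' M2' : Finset (A × B)), IsMatching M1' ∧ IsMatching M2' ∧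
      M1' ∪ M2' = M1 ∪ M2 ∧ M1' ∩ M2' = M1 ∩ M2 ∧
      y ∈ M1.image Prod.snd ∧ y ∉ M2.image Prod.snd ∧
      M1'.image Prod.snd = (M1.image Prod.snd).erase y ∧
      M2'.image Prod.snd = insert y (M2.image Prod.snd) := by
  intro N
  induction N with
  | zero =>
    intro M1 M2 hc hM1 hM2 hlt
    have hM2e : M2 = ∅ := Finset.card_eq_zero.mp (by omega)
    subst hM2e
    obtain ⟨⟨i1, b1⟩, he⟩ := Finset.card_pos.mp (by omega : 0 < M1.card)
    refine ⟨b1, M1.erase (i1, b1), {(i1, b1)},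
      isMatching_subset (Finset.erase_subset _ _) hM1,
      isMatching_subset (Finset.singleton_subset_iff.mpr he) hM1,
      ?_, ?_, Finset.mem_image_of_mem Prod.snd he, by simp, itSet_erase hM1 he, by simp⟩
    · ext e
      rcases eq_or_ne e (i1, b1) with rfl | hne <;>
        simp [Finset.mem_union, Finset.mem_erase, he, *]
    · ext e
      rcases eq_or_ne e (i1, b1) with rfl | hne <;>
        simp [Finset.mem_inter, Finset.mem_erase, *]
  | succ N ih =>
    intro M1 M2 hc hM1 hM2 hlt
    have hcard : (M2.image Prod.fst).card < (M1.image Prod.fst).card := by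
      rw [card_agSet hM1, card_agSet hM2]; exact hlt
    obtain ⟨istar, histar1, histar2⟩ := exists_not_mem_of_card_lt hcard
    obtain ⟨b1, hE1⟩ := mem_agSet.mp histar1
    have hE1M2 : (istar, b1) ∉ M2 := fun h => histar2 (Finset.mem_image_of_mem Prod.fst h)
    by_cases hb1 : b1 ∈ M2.image Prod.snd
    · -- b1 matched in M2 too: recurse
      obtain ⟨i1, hE2⟩ := mem_itSet.mp hb1
      have hne : istar ≠ i1 := fun h => histar2 (h ▸ Finset.mem_image_of_mem Prod.fst hE2)
      have hE2M1 : (i1, b1) ∉ M1 := fun h =>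
        hne (congrArg Prod.fst (hM1.2 (istar, b1) hE1 (i1, b1) h rfl))
      set M1t := M1.erase (istar, b1) with hM1t_def
      set M2t := M2.erase (i1, b1) with hM2t_def
      have hM1tm : IsMatching M1t := isMatching_subset (Finset.erase_subset _ _) hM1
      have hM2tm : IsMatching M2t := isMatching_subset (Finset.erase_subset _ _) hM2
      have hit1 : M1t.image Prod.snd = (M1.image Prod.snd).erase b1 := itSet_erase hM1 hE1
      have hit2 : M2t.image Prod.snd = (M2.image Prod.snd).erase b1 := itSet_erase hM2 hE2
      have hag1 : M1t.image Prod.fst = (M1.image Prod.fst).erase istar := agSet_erase hM1 hE1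
      have hag2 : M2t.image Prod.fst = (M2.image Prod.fst).erase i1 := agSet_erase hM2 hE2
      have hc1 : M1t.card = M1.card - 1 := by rw [hM1t_def, Finset.card_erase_of_mem hE1]
      have hc2 : M2t.card = M2.card - 1 := by rw [hM2t_def, Finset.card_erase_of_mem hE2]
      have hpos2 : 0 < M2.card := Finset.card_pos.mpr ⟨_, hE2⟩
      obtain ⟨y, M1s, M2s, hm1s, hm2s, hun, hin, hy1t, hy2t, hi1', hi2'⟩ :=
        ih M1t M2t (by omega) hM1tm hM2tm (by omega)
      -- basic facts
      have hb1M1 : b1 ∈ M1.image Prod.snd := Finset.mem_image_of_mem Prod.snd hE1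
      have hyb1 : y ≠ b1 := by
        rintro rfl; rw [hit1] at hy1t; exact Finset.notMem_erase _ _ hy1t
      have hyM1 : y ∈ M1.image Prod.snd := by
        rw [hit1] at hy1t; exact Finset.mem_of_mem_erase hy1t
      have hyM2 : y ∉ M2.image Prod.snd := fun h => by
        rw [hit2] at hy2t; exact hy2t (Finset.mem_erase.mpr ⟨hyb1, h⟩)
      have histar1t : istar ∉ M1t.image Prod.fst := by
        rw [hag1]; exact Finset.notMem_erase _ _
      have histar2t : istar ∉ M2t.image Prod.fst := fun h =>
        histar2 (Finset.mem_of_subset (Finset.image_subset_image (Finset.erase_subset _ _)) h)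
      have hi12t : i1 ∉ M2t.image Prod.fst := by
        rw [hag2]; exact Finset.notMem_erase _ _
      have histarun : istar ∉ (M1s ∪ M2s).image Prod.fst := by
        rw [hun, Finset.image_union, Finset.mem_union]
        exact fun h => h.elim histar1t histar2t
      have histars1 : istar ∉ M1s.image Prod.fst := fun h =>
        histarun (Finset.mem_of_subset (Finset.image_subset_image Finset.subset_union_left) h)
      have histars2 : istar ∉ M2s.image Prod.fst := fun h =>
        histarun (Finset.mem_of_subset (Finset.image_subset_image Finset.subset_union_right) h)
      have hb1s1 : b1 ∉ M1s.image Prod.snd := by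
        rw [hi1', hit1]
        exact fun h => Finset.notMem_erase _ _ (Finset.mem_of_mem_erase h)
      have hb1s2 : b1 ∉ M2s.image Prod.snd := by
        rw [hi2', hit2]
        intro h
        rcases Finset.mem_insert.mp h with h' | h'
        · exact hyb1 h'.symm
        · exact Finset.notMem_erase _ _ h'
      -- items of the reassembled matchings (common to both branches)
      have hitems1 : ∀ i : A, (insert (i, b1) M1s).image Prod.snd
          = (M1.image Prod.snd).erase y := by
        intro i
        rw [Finset.image_insert, hi1', hit1, Finset.erase_right_comm,
          Finset.insert_erase (Finset.mem_erase.mpr ⟨fun h => hyb1 h.symm, hb1M1⟩)]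
      have hitems2 : ∀ i : A, (insert (i, b1) M2s).image Prod.snd
          = insert y (M2.image Prod.snd) := by
        intro i
        rw [Finset.image_insert, hi2', hit2, Finset.insert_comm,
          Finset.insert_erase hb1]
      have hE1nM2unions : (istar, b1) ∉ M1t ∧ (istar, b1) ∉ M2t := by
        constructor
        · exact Finset.notMem_erase _ _
        · rw [hM2t_def]; exact fun h => hE1M2 (Finset.mem_of_mem_erase h)
      have hE2n : (i1, b1) ∉ M1t ∧ (i1, b1) ∉ M2t := by
        constructor
        · rw [hM1t_def]; exact fun h => hE2M1 (Finset.mem_of_mem_erase h)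
        · exact Finset.notMem_erase _ _
      by_cases hbr : i1 ∈ M1s.image Prod.fst
      · -- branch B : new edges (istar,b1) into M1s, (i1,b1) into M2s
        have hi1s2 : i1 ∉ M2s.image Prod.fst := by
          intro h
          obtain ⟨d, hd⟩ := mem_agSet.mp h
          obtain ⟨c, hcm⟩ := mem_agSet.mp hbr
          have hdu : (i1, d) ∈ M1t ∪ M2t := by rw [← hun]; exact Finset.mem_union_right _ hd
          have hcu : (i1, c) ∈ M1t ∪ M2t := by rw [← hun]; exact Finset.mem_union_left _ hcm
          have hd1t : (i1, d) ∈ M1t := by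
            rcases Finset.mem_union.mp hdu with h' | h'
            · exact h'
            · exact absurd (Finset.mem_image_of_mem Prod.fst h') hi12t
          have hc1t : (i1, c) ∈ M1t := by
            rcases Finset.mem_union.mp hcu with h' | h'
            · exact h'
            · exact absurd (Finset.mem_image_of_mem Prod.fst h') hi12t
          have : (i1, c) = (i1, d) := hM1tm.1 _ hc1t _ hd1t rfl
          rw [← this] at hd
          have : (i1, c) ∈ M1s ∩ M2s := Finset.mem_inter.mpr ⟨hcm, hd⟩
          rw [hin] at this
          exact hi12t (Finset.mem_image_of_mem Prod.fst (Finset.mem_inter.mp this).2)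
        refine ⟨y, insert (istar, b1) M1s, insert (i1, b1) M2s,
          isMatching_insert hm1s histars1 hb1s1, isMatching_insert hm2s hi1s2 hb1s2,
          ?_, ?_, hyM1, hyM2, hitems1 _, hitems2 _⟩
        · ext e
          rcases eq_or_ne e (istar, b1) with rfl | he1
          · simp [hE1]
          · rcases eq_or_ne e (i1, b1) with rfl | he2
            · simp [hE2]
            · have h' : e ∈ M1s ∪ M2s ↔ e ∈ M1t ∪ M2t := by rw [hun]
              simp only [Finset.mem_union] at h'
              simp only [Finset.mem_insert, Finset.mem_union, he1, he2, false_or]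
              rw [h']
              simp only [hM1t_def, hM2t_def, Finset.mem_erase, he1, he2, true_and, ne_eq,
                not_false_iff]
        · have hne1 : (istar, b1) ∉ insert (i1, b1) M2s := by
            simp only [Finset.mem_insert]
            rintro (h | h)
            · exact hne (congrArg Prod.fst h)
            · exact histars2 (Finset.mem_image_of_mem Prod.fst h)
          have hne2 : (i1, b1) ∉ insert (istar, b1) M1s := by
            simp only [Finset.mem_insert]
            rintro (h | h)
            · exact hne (congrArg Prod.fst h).symm
            · exact hb1s1 (Finset.mem_image_of_mem Prod.snd h)
          ext e
          rcases eq_or_ne e (istar, b1) with rfl | he1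
          · simp only [Finset.mem_inter, hE1M2, and_false, iff_false]
            exact fun h => hne1 h.2
          · rcases eq_or_ne e (i1, b1) with rfl | he2
            · simp only [Finset.mem_inter, hE2M1, false_and, iff_false]
              exact fun h => hne2 h.1
            · have h' : e ∈ M1s ∩ M2s ↔ e ∈ M1t ∩ M2t := by rw [hin]
              simp only [Finset.mem_inter] at h'
              simp only [Finset.mem_inter, Finset.mem_insert, he1, he2, false_or]
              rw [h']
              simp only [hM1t_def, hM2t_def, Finset.mem_erase, he1, he2, true_and, ne_eq,
                not_false_iff]
      · -- branch A : new edges (i1,b1) into M1s, (istar,b1) into M2s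
        refine ⟨y, insert (i1, b1) M1s, insert (istar, b1) M2s,
          isMatching_insert hm1s hbr hb1s1, isMatching_insert hm2s histars2 hb1s2,
          ?_, ?_, hyM1, hyM2, hitems1 _, hitems2 _⟩
        · ext e
          rcases eq_or_ne e (istar, b1) with rfl | he1
          · simp [hE1]
          · rcases eq_or_ne e (i1, b1) with rfl | he2
            · simp [hE2]
            · have h' : e ∈ M1s ∪ M2s ↔ e ∈ M1t ∪ M2t := by rw [hun]
              simp only [Finset.mem_union] at h'
              simp only [Finset.mem_insert, Finset.mem_union, he1, he2, false_or]
              rw [h']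
              simp only [hM1t_def, hM2t_def, Finset.mem_erase, he1, he2, true_and, ne_eq,
                not_false_iff]
        · have hne1 : (istar, b1) ∉ insert (i1, b1) M1s := by
            simp only [Finset.mem_insert]
            rintro (h | h)
            · exact hne (congrArg Prod.fst h)
            · exact histars1 (Finset.mem_image_of_mem Prod.fst h)
          have hne2 : (i1, b1) ∉ insert (istar, b1) M2s := by
            simp only [Finset.mem_insert]
            rintro (h | h)
            · exact hne (congrArg Prod.fst h).symm
            · exact hb1s2 (Finset.mem_image_of_mem Prod.snd h)
          ext e
          rcases eq_or_ne e (istar, b1) with rfl | he1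
          · simp only [Finset.mem_inter, hE1M2, and_false, iff_false]
            exact fun h => hne1 h.1
          · rcases eq_or_ne e (i1, b1) with rfl | he2
            · simp only [Finset.mem_inter, hE2M1, false_and, iff_false]
              exact fun h => hne2 h.2
            · have h' : e ∈ M1s ∩ M2s ↔ e ∈ M1t ∩ M2t := by rw [hin]
              simp only [Finset.mem_inter] at h'
              simp only [Finset.mem_inter, Finset.mem_insert, he1, he2, false_or]
              rw [h']
              simp only [hM1t_def, hM2t_def, Finset.mem_erase, he1, he2, true_and, ne_eq,
                not_false_iff]
    · -- terminal: augment directly with (istar, b1)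
      refine ⟨b1, M1.erase (istar, b1), insert (istar, b1) M2,
        isMatching_subset (Finset.erase_subset _ _) hM1,
        isMatching_insert hM2 histar2 hb1, ?_, ?_,
        Finset.mem_image_of_mem Prod.snd hE1, hb1, itSet_erase hM1 hE1,
        Finset.image_insert _ _ _⟩
      · ext e
        rcases eq_or_ne e (istar, b1) with rfl | he
        · simp [hE1]
        · simp [Finset.mem_union, Finset.mem_insert, Finset.mem_erase, he]
      · ext e
        rcases eq_or_ne e (istar, b1) with rfl | he
        · simp [hE1M2]
        · simp [Finset.mem_inter, Finset.mem_insert, Finset.mem_erase, he]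

end ExchCore

section Val

set_option linter.unusedSectionVars false

variable {A B : Type*} [DecidableEq A] [DecidableEq B] {w : A → B → ℝ}

lemma subset_product_iff {Np : Finset A} {S : Finset B} {M : Finset (A × B)} :
    M ⊆ Np ×ˢ S ↔ M.image Prod.fst ⊆ Np ∧ M.image Prod.snd ⊆ S := by
  constructor
  · intro h
    constructor
    · intro a ha
      obtain ⟨e, he, rfl⟩ := Finset.mem_image.mp ha
      exact (Finset.mem_product.mp (h he)).1
    · intro b hb
      obtain ⟨e, he, rfl⟩ := Finset.mem_image.mp hb
      exact (Finset.mem_product.mp (h he)).2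
  · intro ⟨h1, h2⟩ e he
    exact Finset.mem_product.mpr ⟨h1 (Finset.mem_image_of_mem _ he),
      h2 (Finset.mem_image_of_mem _ he)⟩

/-- There is an optimal matching saturating as many vertices as possible. -/
lemma exists_opt_sat (hw : ∀ i b, 0 ≤ w i b) (Np : Finset A) (S : Finset B) :
    ∃ M : Finset (A × B), IsMatching M ∧ M ⊆ Np ×ˢ S ∧
      weightSum w M = vval w Np S ∧ M.card = min Np.card S.card := by
  classical
  set F := ((Np ×ˢ S).powerset.filter fun M : Finset (A × B) =>
    IsMatching M ∧ weightSum w M = vval w Np S) with hF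
  have hFne : F.Nonempty := by
    obtain ⟨M, h1, h2, h3⟩ := exists_opt w Np S
    exact ⟨M, by simp only [hF, Finset.mem_filter, Finset.mem_powerset]; exact ⟨h2, h1, h3⟩⟩
  obtain ⟨M, hMF, hMmax⟩ := F.exists_max_image (fun M => M.card) hFne
  simp only [hF, Finset.mem_filter, Finset.mem_powerset] at hMF
  obtain ⟨hsub, hmatch, hopt⟩ := hMF
  refine ⟨M, hmatch, hsub, hopt, ?_⟩
  have hle1 : M.card ≤ Np.card := by
    rw [← card_agSet hmatch]
    exact Finset.card_le_card (subset_product_iff.mp hsub).1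
  have hle2 : M.card ≤ S.card := by
    rw [← card_itSet hmatch]
    exact Finset.card_le_card (subset_product_iff.mp hsub).2
  rcases Nat.lt_or_ge M.card (min Np.card S.card) with hlt | hge
  · exfalso
    obtain ⟨i, hiNp, hiM⟩ := exists_not_mem_of_card_lt (s := M.image Prod.fst) (t := Np)
      (by rw [card_agSet hmatch]; omega)
    obtain ⟨b, hbS, hbM⟩ := exists_not_mem_of_card_lt (s := M.image Prod.snd) (t := S)
      (by rw [card_itSet hmatch]; omega)
    have hmatch' : IsMatching (insert (i, b) M) := isMatching_insert hmatch hiM hbM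
    have hsub' : insert (i, b) M ⊆ Np ×ˢ S := by
      intro e he
      rcases Finset.mem_insert.mp he with rfl | he
      · exact Finset.mem_product.mpr ⟨hiNp, hbS⟩
      · exact hsub he
    have hwt : weightSum w (insert (i, b) M) = weightSum w M + w i b := by
      rw [weightSum, Finset.sum_insert (fun h => hiM (Finset.mem_image_of_mem Prod.fst h))]
      rw [add_comm]
      rfl
    have hle : weightSum w (insert (i, b) M) ≤ vval w Np S := le_vval hmatch' hsub'
    have heq : weightSum w (insert (i, b) M) = vval w Np S := by
      have := hw i b
      rw [hwt, hopt]
      rw [hwt, hopt] at hle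
      linarith
    have hmem' : insert (i, b) M ∈ F := by
      simp only [hF, Finset.mem_filter, Finset.mem_powerset]
      exact ⟨hsub', hmatch', heq⟩
    have := hMmax _ hmem'
    rw [Finset.card_insert_of_notMem (fun h => hiM (Finset.mem_image_of_mem Prod.fst h))]
      at this
    omega
  · omega

/-- Submodularity of the assignment valuation. -/
lemma vval_submod (hw : ∀ i b, 0 ≤ w i b) (Np : Finset A) {S S' : Finset B}
    (hSS' : S ⊆ S') (j : B) :
    vval w Np (insert j S') + vval w Np S ≤ vval w Np S' + vval w Np (insert j S) := by
  classical
  by_cases hjS' : j ∈ S'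
  · rw [Finset.insert_eq_self.mpr hjS']
    have : vval w Np S ≤ vval w Np (insert j S) :=
      vval_mono w Np (Finset.subset_insert _ _)
    linarith
  have hjS : j ∉ S := fun h => hjS' (hSS' h)
  obtain ⟨M1, hM1, hM1sub, hM1w⟩ := exists_opt w Np (insert j S')
  obtain ⟨M2, hM2, hM2sub, hM2w⟩ := exists_opt w Np S
  by_cases hjM1 : j ∈ M1.image Prod.snd
  · have hjM2 : j ∉ M2.image Prod.snd := fun h =>
      hjS ((subset_product_iff.mp hM2sub).2 h)
    obtain ⟨M1', M2', hm1', hm2', hun, hin, hcase⟩ :=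
      walk M1.card M1 M2 le_rfl hM1 hM2 j hjM1 hjM2
    have hAg : (M1' ∪ M2').image Prod.fst ⊆ Np := by
      rw [hun, Finset.image_union]
      exact Finset.union_subset (subset_product_iff.mp hM1sub).1
        (subset_product_iff.mp hM2sub).1
    have hAg1 : M1'.image Prod.fst ⊆ Np :=
      (Finset.image_subset_image Finset.subset_union_left).trans hAg
    have hAg2 : M2'.image Prod.fst ⊆ Np :=
      (Finset.image_subset_image Finset.subset_union_right).trans hAg
    have hsum : weightSum w M1' + weightSum w M2' = weightSum w M1 + weightSum w M2 := by
      have e1 : weightSum w (M1' ∪ M2') + weightSum w (M1' ∩ M2')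
          = weightSum w M1' + weightSum w M2' := Finset.sum_union_inter
      have e2 : weightSum w (M1 ∪ M2) + weightSum w (M1 ∩ M2)
          = weightSum w M1 + weightSum w M2 := Finset.sum_union_inter
      rw [← e1, ← e2, hun, hin]
    have hitM1 : M1.image Prod.snd ⊆ insert j S' := (subset_product_iff.mp hM1sub).2
    have hitM2 : M2.image Prod.snd ⊆ S := (subset_product_iff.mp hM2sub).2
    rcases hcase with ⟨h1, h2⟩ | ⟨z, hz2, hz1, h1, h2⟩
    · have hv1 : weightSum w M1' ≤ vval w Np S' := by
        refine le_vval hm1' (subset_product_iff.mpr ⟨hAg1, ?_⟩)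
        rw [h1]
        intro b hb
        have := hitM1 (Finset.mem_of_mem_erase hb)
        rcases Finset.mem_insert.mp this with rfl | h
        · exact absurd rfl (Finset.mem_erase.mp hb).1
        · exact h
      have hv2 : weightSum w M2' ≤ vval w Np (insert j S) := by
        refine le_vval hm2' (subset_product_iff.mpr ⟨hAg2, ?_⟩)
        rw [h2]
        exact Finset.insert_subset_insert _ hitM2
      rw [← hM1w, ← hM2w]
      linarith
    · have hzS : z ∈ S := hitM2 hz2
      have hv1 : weightSum w M1' ≤ vval w Np S' := by
        refine le_vval hm1' (subset_product_iff.mpr ⟨hAg1, ?_⟩)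
        rw [h1]
        intro b hb
        rcases Finset.mem_insert.mp hb with rfl | hb
        · exact hSS' hzS
        · have := hitM1 (Finset.mem_of_mem_erase hb)
          rcases Finset.mem_insert.mp this with rfl | h
          · exact absurd rfl (Finset.mem_erase.mp hb).1
          · exact h
      have hv2 : weightSum w M2' ≤ vval w Np (insert j S) := by
        refine le_vval hm2' (subset_product_iff.mpr ⟨hAg2, ?_⟩)
        rw [h2]
        refine Finset.insert_subset_insert _ ?_
        exact (Finset.erase_subset _ _).trans hitM2
      rw [← hM1w, ← hM2w]
      linarith
  · -- M1 does not use j at all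
    have hv1 : vval w Np (insert j S') ≤ vval w Np S' := by
      rw [← hM1w]
      refine le_vval hM1 (subset_product_iff.mpr ⟨(subset_product_iff.mp hM1sub).1, ?_⟩)
      intro b hb
      have := (subset_product_iff.mp hM1sub).2 hb
      rcases Finset.mem_insert.mp this with rfl | h
      · exact absurd hb hjM1
      · exact h
    have hv2 : vval w Np S ≤ vval w Np (insert j S) := vval_mono w Np (Finset.subset_insert _ _)
    linarith

/-- The single-item exchange property. -/
lemma vval_exch (hw : ∀ i b, 0 ≤ w i b) (Np : Finset A) {S T : Finset B}
    (hST : S.card < T.card) (hSN : S.card < Np.card) :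
    ∃ y ∈ T, y ∉ S ∧
      vval w Np T + vval w Np S ≤ vval w Np (T.erase y) + vval w Np (insert y S) := by
  classical
  obtain ⟨MT, hMT, hMTsub, hMTw, hMTc⟩ := exists_opt_sat hw Np T
  obtain ⟨MS, hMS, hMSsub, hMSw, hMSc⟩ := exists_opt_sat hw Np S
  have hitems : MS.image Prod.snd = S := by
    apply Finset.eq_of_subset_of_card_le (subset_product_iff.mp hMSsub).2
    rw [card_itSet hMS, hMSc]
    omega
  have hlt : MS.card < MT.card := by
    rw [hMSc, hMTc]
    omega
  obtain ⟨y, M1', M2', hm1', hm2', hun, hin, hy1, hy2, hi1, hi2⟩ :=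
    exchCore MS.card MT MS le_rfl hMT hMS hlt
  have hyT : y ∈ T := (subset_product_iff.mp hMTsub).2 hy1
  have hyS : y ∉ S := by rw [← hitems]; exact hy2
  have hAg : (M1' ∪ M2').image Prod.fst ⊆ Np := by
    rw [hun, Finset.image_union]
    exact Finset.union_subset (subset_product_iff.mp hMTsub).1
      (subset_product_iff.mp hMSsub).1
  have hsum : weightSum w M1' + weightSum w M2' = weightSum w MT + weightSum w MS := by
    have e1 : weightSum w (M1' ∪ M2') + weightSum w (M1' ∩ M2')
        = weightSum w M1' + weightSum w M2' := Finset.sum_union_inter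
    have e2 : weightSum w (MT ∪ MS) + weightSum w (MT ∩ MS)
        = weightSum w MT + weightSum w MS := Finset.sum_union_inter
    rw [← e1, ← e2, hun, hin]
  have hv1 : weightSum w M1' ≤ vval w Np (T.erase y) := by
    refine le_vval hm1' (subset_product_iff.mpr
      ⟨(Finset.image_subset_image Finset.subset_union_left).trans hAg, ?_⟩)
    rw [hi1]
    intro b hb
    exact Finset.mem_erase.mpr ⟨(Finset.mem_erase.mp hb).1,
      (subset_product_iff.mp hMTsub).2 (Finset.mem_of_mem_erase hb)⟩
  have hv2 : weightSum w M2' ≤ vval w Np (insert y S) := by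
    refine le_vval hm2' (subset_product_iff.mpr
      ⟨(Finset.image_subset_image Finset.subset_union_right).trans hAg, ?_⟩)
    rw [hi2, hitems]
  refine ⟨y, hyT, hyS, ?_⟩
  rw [← hMTw, ← hMSw]
  linarith

lemma marginalVal_nonneg (w : A → B → ℝ) (Np : Finset A) (S : Finset B) (j : B) :
    0 ≤ marginalVal w Np S j :=
  sub_nonneg.mpr (vval_mono w Np (Finset.subset_insert _ _))

lemma marginalVal_antitone (hw : ∀ i b, 0 ≤ w i b) (Np : Finset A) {S S' : Finset B}
    (h : S ⊆ S') (j : B) :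
    marginalVal w Np S' j ≤ marginalVal w Np S j := by
  have := vval_submod hw Np h j
  unfold marginalVal
  linarith

lemma vval_insert_le (hw : ∀ i b, 0 ≤ w i b) (Np : Finset A) {S X : Finset B}
    (h : S ⊆ X) (j : B) :
    vval w Np (insert j X) ≤ vval w Np X + marginalVal w Np S j := by
  have := marginalVal_antitone hw Np h j
  unfold marginalVal at *
  linarith

end Val

section Round2

set_option linter.unusedSectionVars false

variable {A B : Type*} [DecidableEq A] [DecidableEq B] {w : A → B → ℝ}

/-- Abstract one-round preservation of the pairwise invariant. -/
lemma round2 (hw : ∀ i b, 0 ≤ w i b) (Np : Finset A)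
    {P0 P1 Q0 Q1 π0 πp πq πe : Finset B}
    (hπq : πq ⊆ π0) (hπe : πe ⊆ πp)
    (hp : (∃ x ∈ πp, 0 < marginalVal w Np P0 x ∧
        (∀ y ∈ πp, marginalVal w Np P0 y ≤ marginalVal w Np P0 x) ∧ P1 = insert x P0) ∨
      ((∀ y ∈ πp, marginalVal w Np P0 y ≤ 0) ∧ P1 = P0))
    (hq : (∃ j' ∈ πq, Q1 = insert j' Q0) ∨ Q1 = Q0)
    (hold : Q0 = ∅ ∨ ∃ j ∈ Q0, vval w Np (P0 ∪ Q0.erase j) ≤ 2 * vval w Np P0 ∧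
      ∀ y ∈ π0, vval w Np (P0 ∪ Q0.erase j) + marginalVal w Np P0 y ≤ 2 * vval w Np P0) :
    Q1 = ∅ ∨ ∃ j ∈ Q1, vval w Np (P1 ∪ Q1.erase j) ≤ 2 * vval w Np P1 ∧
      ∀ y ∈ πe, vval w Np (P1 ∪ Q1.erase j) + marginalVal w Np P1 y ≤ 2 * vval w Np P1 := by
  classical
  set d := vval w Np P1 - vval w Np P0 with hd
  have hP0nn : 0 ≤ vval w Np P0 := vval_nonneg hw Np P0
  have hd0 : 0 ≤ d := by
    rcases hp with ⟨x, _, hpos, _, hP1⟩ | ⟨_, hP1⟩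
    · have h' : vval w Np (insert x P0) = vval w Np P0 + marginalVal w Np P0 x := by
        unfold marginalVal; ring
      rw [hd, hP1, h']; linarith
    · simp [hd, hP1]
  have hdP1 : vval w Np P1 = vval w Np P0 + d := by rw [hd]; ring
  have hF2 : ∀ Z : Finset B, vval w Np (P1 ∪ Z) ≤ vval w Np (P0 ∪ Z) + d := by
    intro Z
    rcases hp with ⟨x, _, _, _, hP1⟩ | ⟨_, hP1⟩
    · rw [hP1, Finset.insert_union]
      have h1 := vval_insert_le hw Np (Finset.subset_union_left : P0 ⊆ P0 ∪ Z) x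
      have h2 : d = marginalVal w Np P0 x := by
        rw [hd, hP1]; unfold marginalVal; ring
      rw [h2]; exact h1
    · rw [hP1]
      linarith [le_refl (vval w Np (P0 ∪ Z))]
  have hF1 : ∀ y ∈ πe, marginalVal w Np P1 y ≤ d := by
    intro y hy
    rcases hp with ⟨x, _, _, hmax, hP1⟩ | ⟨hneg, hP1⟩
    · have h1 : marginalVal w Np (insert x P0) y ≤ marginalVal w Np P0 y :=
        marginalVal_antitone hw Np (Finset.subset_insert _ _) y
      have h2 : d = marginalVal w Np P0 x := by
        rw [hd, hP1]; unfold marginalVal; ring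
      rw [h2, hP1]
      exact h1.trans (hmax y (hπe hy))
    · have h5 := hneg y (hπe hy)
      rw [hP1]
      linarith
  rcases hold with rfl | ⟨j, hjQ0, hV, hpool⟩
  · -- Q0 = ∅
    rcases hq with ⟨j', hj'q, rfl⟩ | rfl
    · right
      refine ⟨j', Finset.mem_insert_self _ _, ?_, ?_⟩
      · rw [Finset.erase_insert (Finset.notMem_empty _), Finset.union_empty]
        linarith [vval_nonneg hw Np P1]
      · intro y hy
        rw [Finset.erase_insert (Finset.notMem_empty _), Finset.union_empty]
        have := hF1 y hy
        rw [hdP1]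
        linarith
    · exact Or.inl rfl
  · -- Q0 nonempty with witness j
    right
    have hpass : Q1 = Q0 → ∃ j ∈ Q1, vval w Np (P1 ∪ Q1.erase j) ≤ 2 * vval w Np P1 ∧
        ∀ y ∈ πe, vval w Np (P1 ∪ Q1.erase j) + marginalVal w Np P1 y ≤ 2 * vval w Np P1 := by
      rintro rfl
      refine ⟨j, hjQ0, ?_, ?_⟩
      · have := hF2 (Q1.erase j)
        rw [hdP1]
        linarith
      · intro y hy
        have h1 := hF2 (Q1.erase j)
        have h2 := hF1 y hy
        rw [hdP1]
        linarith
    rcases hq with ⟨j', hj'q, hQ1⟩ | rfl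
    · by_cases hj'Q0 : j' ∈ Q0
      · exact hpass (by rw [hQ1, Finset.insert_eq_self.mpr hj'Q0])
      · have hjj' : j' ≠ j := fun h => hj'Q0 (h ▸ hjQ0)
        subst hQ1
        refine ⟨j, Finset.mem_insert_of_mem hjQ0, ?_, ?_⟩
        · have he : (insert j' Q0).erase j = insert j' (Q0.erase j) :=
            Finset.erase_insert_of_ne hjj'
          rw [he, Finset.union_insert]
          have h1 := hF2 (insert j' (Q0.erase j))
          simp only [Finset.union_insert] at h1
          have h2 : vval w Np (insert j' (P0 ∪ Q0.erase j)) ≤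
              vval w Np (P0 ∪ Q0.erase j) + marginalVal w Np P0 j' :=
            vval_insert_le hw Np Finset.subset_union_left j'
          have h3 := hpool j' (hπq hj'q)
          rw [hdP1]
          linarith
        · intro y hy
          have he : (insert j' Q0).erase j = insert j' (Q0.erase j) :=
            Finset.erase_insert_of_ne hjj'
          rw [he, Finset.union_insert]
          have h1 := hF2 (insert j' (Q0.erase j))
          simp only [Finset.union_insert] at h1
          have h2 : vval w Np (insert j' (P0 ∪ Q0.erase j)) ≤
              vval w Np (P0 ∪ Q0.erase j) + marginalVal w Np P0 j' :=
            vval_insert_le hw Np Finset.subset_union_left j'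
          have h3 := hpool j' (hπq hj'q)
          have h4 := hF1 y hy
          rw [hdP1]
          linarith
    · exact hpass rfl

end Round2

section Algo

set_option linter.unusedSectionVars false

variable {n m k : ℕ}

lemma mem_remainingItems {Bu : Fin k → Finset (Fin m)} {j : Fin m} :
    j ∈ remainingItems Bu ↔ ∀ r, j ∉ Bu r := by
  simp [remainingItems]

lemma remainingItems_update (Bu : Fin k → Finset (Fin m)) (q : Fin k) (j : Fin m)
    (hj : j ∈ remainingItems Bu) :
    remainingItems (Function.update Bu q (insert j (Bu q))) = (remainingItems Bu).erase j := by
  ext x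
  simp only [remainingItems, Finset.mem_erase, Finset.mem_sdiff, Finset.mem_univ, true_and,
    Finset.mem_biUnion, not_exists, Function.update_apply]
  constructor
  · intro h
    have hq := h q
    rw [if_pos rfl] at hq
    simp only [Finset.mem_insert, not_or] at hq
    refine ⟨hq.1, fun r => ?_⟩
    by_cases hrq : r = q
    · subst hrq; exact hq.2
    · have := h r; rwa [if_neg hrq] at this
  · rintro ⟨hxj, h⟩ r
    by_cases hrq : r = q
    · subst hrq; rw [if_pos rfl]
      simp only [Finset.mem_insert, not_or]
      exact ⟨hxj, h r⟩
    · rw [if_neg hrq]; exact h r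

/-- Invariant: the current bundle of each class is an optimal bundle of its size
among the items it could have collected. -/
def Opt1 (u : Fin n → Fin m → ℝ) (cls : Fin k → Finset (Fin n))
    (Bu : Fin k → Finset (Fin m)) : Prop :=
  ∀ q : Fin k, ∀ T : Finset (Fin m), T ⊆ Bu q ∪ remainingItems Bu →
    T.card ≤ (Bu q).card → vval u (cls q) T ≤ vval u (cls q) (Bu q)

/-- Invariant: each collected item is essential. -/
def Ess (u : Fin n → Fin m → ℝ) (cls : Fin k → Finset (Fin n))
    (Bu : Fin k → Finset (Fin m)) : Prop :=
  ∀ q : Fin k, ∀ x ∈ Bu q,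
    vval u (cls q) ((Bu q).erase x) < vval u (cls q) (Bu q)

/-- Invariant: the pairwise half-envy-free-up-to-one-item condition. -/
def PairInv (u : Fin n → Fin m → ℝ) (cls : Fin k → Finset (Fin n))
    (Bu : Fin k → Finset (Fin m)) : Prop :=
  ∀ p q : Fin k, p ≠ q → (Bu q = ∅ ∨ ∃ j ∈ Bu q,
    vval u (cls p) (Bu p ∪ (Bu q).erase j) ≤ 2 * vval u (cls p) (Bu p) ∧
    ∀ y ∈ remainingItems Bu,
      vval u (cls p) (Bu p ∪ (Bu q).erase j) + marginalVal u (cls p) (Bu p) y ≤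
        2 * vval u (cls p) (Bu p))

variable {u : Fin n → Fin m → ℝ} {cls : Fin k → Finset (Fin n)}

lemma classStep_facts {q0 : Fin k} {Bu Bu' : Fin k → Finset (Fin m)}
    (hstep : ClassStep u cls q0 Bu Bu') :
    (∀ r, r ≠ q0 → Bu' r = Bu r) ∧ remainingItems Bu' ⊆ remainingItems Bu := by
  rcases hstep with ⟨j, hj, _, _, rfl⟩ | ⟨_, rfl⟩
  · refine ⟨fun r hr => Function.update_of_ne hr _ _, ?_⟩
    rw [remainingItems_update Bu q0 j hj]
    exact Finset.erase_subset _ _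
  · exact ⟨fun _ _ => rfl, le_refl _⟩

lemma classStep_opt1_ess (hw : ∀ i b, 0 ≤ u i b) {q0 : Fin k}
    {Bu Bu' : Fin k → Finset (Fin m)}
    (hstep : ClassStep u cls q0 Bu Bu') (h1 : Opt1 u cls Bu) (h2 : Ess u cls Bu) :
    Opt1 u cls Bu' ∧ Ess u cls Bu' := by
  rcases hstep with ⟨j, hjrem, hδ, hmax, rfl⟩ | ⟨_, rfl⟩
  swap
  · exact ⟨h1, h2⟩
  have hrem' := remainingItems_update Bu q0 j hjrem
  have hjq0 : j ∉ Bu q0 := mem_remainingItems.mp hjrem q0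
  have hBq0 : Function.update Bu q0 (insert j (Bu q0)) q0 = insert j (Bu q0) :=
    Function.update_self _ _ _
  have hmarg : vval u (cls q0) (insert j (Bu q0))
      = vval u (cls q0) (Bu q0) + marginalVal u (cls q0) (Bu q0) j := by
    unfold marginalVal; ring
  -- the class q0 is not yet saturated
  have hNp : (Bu q0).card < (cls q0).card := by
    by_contra hcon
    push_neg at hcon
    obtain ⟨Mo, hMo, hMosub, hMow⟩ := exists_opt u (cls q0) (insert j (Bu q0))
    set T0 := Mo.image Prod.snd with hT0
    have hT0c : T0.card ≤ (Bu q0).card := by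
      calc T0.card = Mo.card := card_itSet hMo
        _ = (Mo.image Prod.fst).card := (card_agSet hMo).symm
        _ ≤ (cls q0).card := Finset.card_le_card (subset_product_iff.mp hMosub).1
        _ ≤ (Bu q0).card := hcon
    have hT0sub : T0 ⊆ Bu q0 ∪ remainingItems Bu := by
      intro b hb
      have := (subset_product_iff.mp hMosub).2 hb
      rcases Finset.mem_insert.mp this with rfl | h
      · exact Finset.mem_union_right _ hjrem
      · exact Finset.mem_union_left _ h
    have hv : vval u (cls q0) (insert j (Bu q0)) ≤ vval u (cls q0) T0 := by
      rw [← hMow]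
      exact le_vval hMo (subset_product_iff.mpr ⟨(subset_product_iff.mp hMosub).1, le_refl _⟩)
    have := h1 q0 T0 hT0sub hT0c
    rw [hmarg] at hv
    linarith
  constructor
  · -- Opt1 preserved
    intro q T hTsub hTcard
    by_cases hq : q0 = q
    · subst hq
      rw [hBq0] at hTcard ⊢
      rw [Function.update_self, hrem'] at hTsub
      have hTsub' : T ⊆ Bu q0 ∪ remainingItems Bu := by
        intro x hx
        rcases Finset.mem_union.mp (hTsub hx) with hx' | hx'
        · rcases Finset.mem_insert.mp hx' with rfl | hx''
          · exact Finset.mem_union_right _ hjrem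
          · exact Finset.mem_union_left _ hx''
        · exact Finset.mem_union_right _ (Finset.mem_of_mem_erase hx')
      rw [Finset.card_insert_of_notMem hjq0] at hTcard
      rcases Nat.lt_or_ge T.card ((Bu q0).card + 1) with hlt | hge
      · -- small T : use the old invariant
        have := h1 q0 T hTsub' (by omega)
        have hmono : vval u (cls q0) (Bu q0) ≤ vval u (cls q0) (insert j (Bu q0)) :=
          vval_mono u (cls q0) (Finset.subset_insert _ _)
        linarith
      · -- T has card (Bu q0).card + 1 : exchange
        have hTc : (Bu q0).card < T.card := by omega
        obtain ⟨y, hyT, hyB, hexch⟩ := vval_exch hw (cls q0) hTc hNp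
        have herase : vval u (cls q0) (T.erase y) ≤ vval u (cls q0) (Bu q0) := by
          refine h1 q0 (T.erase y) ((Finset.erase_subset _ _).trans hTsub') ?_
          rw [Finset.card_erase_of_mem hyT]
          omega
        have hymarg : marginalVal u (cls q0) (Bu q0) y ≤ marginalVal u (cls q0) (Bu q0) j := by
          rcases Finset.mem_union.mp (hTsub hyT) with hy' | hy'
          · rcases Finset.mem_insert.mp hy' with rfl | hy''
            · exact le_refl _
            · exact absurd hy'' hyB
          · exact hmax y (Finset.mem_of_mem_erase hy')
        have hinsy : vval u (cls q0) (insert y (Bu q0))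
            = vval u (cls q0) (Bu q0) + marginalVal u (cls q0) (Bu q0) y := by
          unfold marginalVal; ring
        rw [hmarg]
        rw [hinsy] at hexch
        linarith
    · have hq' : q ≠ q0 := fun hh => hq hh.symm
      rw [Function.update_of_ne hq'] at hTsub hTcard ⊢
      rw [hrem'] at hTsub
      exact h1 q T (hTsub.trans (Finset.union_subset_union_right (Finset.erase_subset _ _)))
        hTcard
  · -- Ess preserved
    intro q x hx
    by_cases hq : q0 = q
    · subst hq
      rw [hBq0] at hx ⊢
      rcases Finset.mem_insert.mp hx with rfl | hxB
      · rw [Finset.erase_insert hjq0, hmarg]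
        linarith
      · have hxj : x ≠ j := fun h => hjq0 (h ▸ hxB)
        rw [Finset.erase_insert_of_ne (fun h : j = x => hxj h.symm)]
        have hjx : j ∉ (Bu q0).erase x := fun h => hjq0 (Finset.mem_of_mem_erase h)
        have hTsub : insert j ((Bu q0).erase x) ⊆ Bu q0 ∪ remainingItems Bu := by
          intro b hb
          rcases Finset.mem_insert.mp hb with rfl | hb
          · exact Finset.mem_union_right _ hjrem
          · exact Finset.mem_union_left _ (Finset.mem_of_mem_erase hb)
        have hTcard : (insert j ((Bu q0).erase x)).card ≤ (Bu q0).card := by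
          rw [Finset.card_insert_of_notMem hjx, Finset.card_erase_of_mem hxB]
          have : 0 < (Bu q0).card := Finset.card_pos.mpr ⟨x, hxB⟩
          omega
        have := h1 q0 _ hTsub hTcard
        rw [hmarg]
        linarith
    · have hq' : q ≠ q0 := fun hh => hq hh.symm
      rw [Function.update_of_ne hq'] at hx ⊢
      exact h2 q x hx

end Algo

section RoundMach

set_option linter.unusedSectionVars false

variable {n m k : ℕ} {u : Fin n → Fin m → ℝ} {cls : Fin k → Finset (Fin n)}

lemma roundStep_preserves (hw : ∀ i b, 0 ≤ u i b) {Bu Bu' : Fin k → Finset (Fin m)}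
    (hround : RoundStep u cls Bu Bu') (h1 : Opt1 u cls Bu) (h2 : Ess u cls Bu)
    (h3 : PairInv u cls Bu) :
    Opt1 u cls Bu' ∧ Ess u cls Bu' ∧ PairInv u cls Bu' := by
  obtain ⟨f, hf0, hflast, hfstep⟩ := hround
  -- each ClassStep only changes its own coordinate
  have hcoord : ∀ p : Fin k, ∀ r : Fin k, r ≠ p → f p.succ r = f p.castSucc r := by
    intro p r hrp
    rcases hfstep p with ⟨j, _, _, _, heq⟩ | ⟨_, heq⟩
    · rw [heq, Function.update_of_ne hrp]
    · rw [heq]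
  have hA : ∀ i : Fin (k + 1), ∀ r : Fin k, (i : ℕ) ≤ (r : ℕ) → f i r = Bu r := by
    intro i
    induction i using Fin.induction with
    | zero => intro r _; rw [hf0]
    | succ p ih =>
      intro r hr
      rw [Fin.val_succ] at hr
      have hne : r ≠ p := by
        intro h; subst h; omega
      rw [hcoord p r hne]
      exact ih r (by rw [Fin.coe_castSucc]; omega)
  have hB : ∀ i : Fin (k + 1), ∀ r : Fin k, (r : ℕ) < (i : ℕ) → f i r = Bu' r := by
    intro i
    induction i using Fin.reverseInduction with
    | last => intro r _; rw [hflast]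
    | cast p ih =>
      intro r hr
      rw [Fin.coe_castSucc] at hr
      have hne : r ≠ p := by
        intro h; subst h; omega
      rw [← hcoord p r hne]
      exact ih r (by rw [Fin.val_succ]; omega)
  have hstepPool : ∀ p : Fin k,
      remainingItems (f p.succ) ⊆ remainingItems (f p.castSucc) := fun p =>
    (classStep_facts (hfstep p)).2
  have hpool : ∀ i' : Fin (k + 1), ∀ i : Fin (k + 1), i ≤ i' →
      remainingItems (f i') ⊆ remainingItems (f i) := by
    intro i'
    induction i' using Fin.induction with
    | zero =>
      intro i hi
      rw [Fin.le_zero_iff.mp hi]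
    | succ p ih =>
      intro i hi
      by_cases hie : i = p.succ
      · rw [hie]
      · have hile : i ≤ p.castSucc := by
          have h1 : (i : ℕ) ≤ (p : ℕ) + 1 := by
            have := hi; rw [Fin.le_def, Fin.val_succ] at this; exact this
          have h2 : (i : ℕ) ≠ (p : ℕ) + 1 := by
            intro h; apply hie; apply Fin.ext; rw [Fin.val_succ]; exact h
          rw [Fin.le_def, Fin.coe_castSucc]
          omega
        exact (hstepPool p).trans (ih i hile)
  -- the bundles before and after each class's own step
  have hbefore : ∀ r : Fin k, f r.castSucc r = Bu r := fun r =>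
    hA r.castSucc r (by rw [Fin.coe_castSucc])
  have hafter : ∀ r : Fin k, f r.succ r = Bu' r := fun r =>
    hB r.succ r (by rw [Fin.val_succ]; omega)
  -- Opt1 and Ess are preserved stepwise
  have h12 : ∀ i : Fin (k + 1), Opt1 u cls (f i) ∧ Ess u cls (f i) := by
    intro i
    induction i using Fin.induction with
    | zero => rw [hf0]; exact ⟨h1, h2⟩
    | succ p ih => exact classStep_opt1_ess hw (hfstep p) ih.1 ih.2
  have h12' := h12 (Fin.last k)
  rw [hflast] at h12'
  refine ⟨h12'.1, h12'.2, ?_⟩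
  -- the pairwise invariant
  intro p q hne
  have hπq : remainingItems (f q.castSucc) ⊆ remainingItems Bu := by
    have := hpool q.castSucc 0 (Fin.zero_le _)
    rwa [hf0] at this
  have hπe : remainingItems Bu' ⊆ remainingItems (f p.castSucc) := by
    have := hpool (Fin.last k) p.castSucc (Fin.le_last _)
    rwa [hflast] at this
  have hp : (∃ x ∈ remainingItems (f p.castSucc), 0 < marginalVal u (cls p) (Bu p) x ∧
      (∀ y ∈ remainingItems (f p.castSucc),
        marginalVal u (cls p) (Bu p) y ≤ marginalVal u (cls p) (Bu p) x) ∧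
      Bu' p = insert x (Bu p)) ∨
      ((∀ y ∈ remainingItems (f p.castSucc), marginalVal u (cls p) (Bu p) y ≤ 0) ∧
        Bu' p = Bu p) := by
    rcases hfstep p with ⟨x, hxrem, hxpos, hxmax, hupd⟩ | ⟨hneg, hupd⟩
    · left
      refine ⟨x, hxrem, ?_, ?_, ?_⟩
      · rwa [hbefore p] at hxpos
      · intro y hy
        have := hxmax y hy
        rwa [hbefore p] at this
      · rw [← hafter p, hupd, Function.update_self, hbefore p]
    · right
      constructor
      · intro y hy
        have := hneg y hy
        rwa [hbefore p] at this
      · rw [← hafter p, hupd, hbefore p]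
  have hq : (∃ j' ∈ remainingItems (f q.castSucc), Bu' q = insert j' (Bu q)) ∨
      Bu' q = Bu q := by
    rcases hfstep q with ⟨x, hxrem, _, _, hupd⟩ | ⟨_, hupd⟩
    · left
      exact ⟨x, hxrem, by rw [← hafter q, hupd, Function.update_self, hbefore q]⟩
    · right
      rw [← hafter q, hupd, hbefore q]
  exact round2 hw (cls p) hπq hπe hp hq (h3 p q hne)

lemma reflTrans_inv (hw : ∀ i b, 0 ≤ u i b) {Bu : Fin k → Finset (Fin m)}
    (h : Relation.ReflTransGen (RoundStep u cls) (fun _ => ∅) Bu) :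
    Opt1 u cls Bu ∧ Ess u cls Bu ∧ PairInv u cls Bu := by
  induction h with
  | refl =>
    refine ⟨?_, ?_, ?_⟩
    · intro q T hTsub hTcard
      have hT : T = ∅ := Finset.card_eq_zero.mp (by simpa using hTcard)
      rw [hT]
    · intro q x hx
      simp at hx
    · intro p q _
      exact Or.inl rfl
  | @tail b c _ hstep ih =>
    obtain ⟨ih1, ih2, ih3⟩ := ih
    exact roundStep_preserves hw hstep ih1 ih2 ih3

end RoundMach

/-- the matching produced by the round-robin algorithm is
`1/2`-CEF1 and non-wasteful. -/
theorem stmt8 {n m k : ℕ} (cls : Fin k → Finset (Fin n))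
    (hpart : IsClassPartition cls)
    (u : Fin n → Fin m → ℝ) (hu : ∀ i j, u i j ∈ Set.Icc (0 : ℝ) 1)
    (M : Finset (Fin n × Fin m)) (hM : IsRoundRobinOutput u cls M) :
    (∀ p q : Fin k, p ≠ q →
      vval u (cls p) (bundleOf M (cls q)) ≤ classUtil u M (cls p) ∨
      ∃ j ∈ bundleOf M (cls q),
        vval u (cls p) ((bundleOf M (cls q)).erase j) ≤ 2 * classUtil u M (cls p)) ∧
    NonWasteful u cls M := by
  classical
  have hw : ∀ i b, 0 ≤ u i b := fun i b => (hu i b).1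
  obtain ⟨Bu, hrel, hstop, hmatch, hbund, hutil⟩ := hM
  obtain ⟨hOpt1, hEss, hPair⟩ := reflTrans_inv hw hrel
  -- basic facts about the matched bundles
  have hMp_matching : ∀ p : Fin k, IsMatching (M.filter fun e => e.1 ∈ cls p) :=
    fun p => isMatching_subset (Finset.filter_subset _ _) hmatch
  have hbundle_eq : ∀ p : Fin k,
      bundleOf M (cls p) = (M.filter fun e => e.1 ∈ cls p).image Prod.snd := fun p => rfl
  have hMp_sub : ∀ p : Fin k,
      (M.filter fun e => e.1 ∈ cls p) ⊆ (cls p) ×ˢ bundleOf M (cls p) := by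
    intro p e he
    have h1 := Finset.mem_filter.mp he
    exact Finset.mem_product.mpr ⟨h1.2, by
      rw [hbundle_eq]; exact Finset.mem_image_of_mem Prod.snd he⟩
  have hcu_eq : ∀ p : Fin k,
      classUtil u M (cls p) = weightSum u (M.filter fun e => e.1 ∈ cls p) := fun p => rfl
  have hbsub : ∀ p : Fin k, bundleOf M (cls p) ⊆ Bu p := by
    intro p b hb
    rw [hbundle_eq] at hb
    obtain ⟨e, he, rfl⟩ := Finset.mem_image.mp hb
    have h1 := Finset.mem_filter.mp he
    exact hbund p e h1.1 h1.2
  have hveq : ∀ p : Fin k, vval u (cls p) (bundleOf M (cls p)) = vval u (cls p) (Bu p) := by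
    intro p
    have hle1 : classUtil u M (cls p) ≤ vval u (cls p) (bundleOf M (cls p)) := by
      rw [hcu_eq]
      exact le_vval (hMp_matching p) (hMp_sub p)
    have hle2 : vval u (cls p) (bundleOf M (cls p)) ≤ vval u (cls p) (Bu p) :=
      vval_mono u (cls p) (hbsub p)
    have := hutil p
    linarith
  have hcu_v : ∀ p : Fin k, classUtil u M (cls p) = vval u (cls p) (Bu p) := hutil
  constructor
  · -- 1/2-CEF1
    intro p q hpq
    rcases hPair p q hpq with hQe | ⟨j, hjBuq, hVle, _⟩
    · left
      have : bundleOf M (cls q) = ∅ :=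
        Finset.subset_empty.mp (by rw [← hQe]; exact hbsub q)
      rw [this, vval_empty, hcu_v p]
      exact vval_nonneg hw _ _
    · by_cases hbq : bundleOf M (cls q) = ∅
      · left
        rw [hbq, vval_empty, hcu_v p]
        exact vval_nonneg hw _ _
      · right
        have hup : vval u (cls p) ((Bu q).erase j) ≤ 2 * classUtil u M (cls p) := by
          have h1 : vval u (cls p) ((Bu q).erase j) ≤
              vval u (cls p) (Bu p ∪ (Bu q).erase j) :=
            vval_mono u (cls p) Finset.subset_union_right
          rw [hcu_v p]
          linarith
        by_cases hjb : j ∈ bundleOf M (cls q)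
        · refine ⟨j, hjb, ?_⟩
          have h2 : vval u (cls p) ((bundleOf M (cls q)).erase j) ≤
              vval u (cls p) ((Bu q).erase j) :=
            vval_mono u (cls p) (Finset.erase_subset_erase j (hbsub q))
          linarith
        · obtain ⟨j'', hj''⟩ := Finset.nonempty_iff_ne_empty.mpr hbq
          refine ⟨j'', hj'', ?_⟩
          have hsub' : bundleOf M (cls q) ⊆ (Bu q).erase j := by
            intro b hb
            exact Finset.mem_erase.mpr ⟨fun h => hjb (h ▸ hb), hbsub q hb⟩
          have h2 : vval u (cls p) ((bundleOf M (cls q)).erase j'') ≤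
              vval u (cls p) ((Bu q).erase j) :=
            vval_mono u (cls p) ((Finset.erase_subset _ _).trans hsub')
          linarith
  · -- Non-wastefulness
    intro j0 hwasted
    rcases hwasted with ⟨hunm, p, hpgain⟩ | ⟨q, hjb, hveq2, p, hpq, hpgain⟩
    · -- case (a) : j0 unmatched yet desired
      by_cases hrem : j0 ∈ remainingItems Bu
      · have hm := hstop p j0 hrem
        have h1 : vval u (cls p) (insert j0 (bundleOf M (cls p))) ≤
            vval u (cls p) (insert j0 (Bu p)) :=
          vval_mono u (cls p) (Finset.insert_subset_insert _ (hbsub p))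
        have h2 : vval u (cls p) (insert j0 (Bu p)) ≤ vval u (cls p) (Bu p) := by
          unfold marginalVal at hm
          linarith
        rw [hveq p] at hpgain
        linarith
      · -- j0 belongs to some bundle but is unmatched : contradicts essentiality
        rw [mem_remainingItems] at hrem
        push_neg at hrem
        obtain ⟨q0, hq0⟩ := hrem
        have hnotb : j0 ∉ bundleOf M (cls q0) := by
          intro hb
          rw [hbundle_eq] at hb
          obtain ⟨e, he, he2⟩ := Finset.mem_image.mp hb
          have h1 := Finset.mem_filter.mp he
          exact hunm e.1 (by rw [← Prod.mk.eta (p := e), he2] at h1; exact h1.1)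
        have hsub' : bundleOf M (cls q0) ⊆ (Bu q0).erase j0 := by
          intro b hb
          exact Finset.mem_erase.mpr ⟨fun h => hnotb (h ▸ hb), hbsub q0 hb⟩
        have h1 : vval u (cls q0) (Bu q0) ≤ vval u (cls q0) ((Bu q0).erase j0) := by
          rw [← hveq q0]
          exact vval_mono u (cls q0) hsub'
        exact absurd h1 (not_le.mpr (hEss q0 j0 hq0))
    · -- case (b) : j0 redundant for q yet desired by p
      have hjBu : j0 ∈ Bu q := hbsub q hjb
      have h1 : vval u (cls q) (Bu q) ≤ vval u (cls q) ((Bu q).erase j0) := by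
        rw [← hveq q, hveq2]
        exact vval_mono u (cls q) (Finset.erase_subset_erase j0 (hbsub q))
      exact absurd h1 (not_le.mpr (hEss q j0 hjBu))


end ClassEF
end

section
/- For every ε > 0 there exists N₀ such that for all positive integers n_p, n_q with min(n_p, n_q) ≥ N₀: Σ_{r=1}^{min(n_p,n_q)} (1/r) Σ_{r'=1}^{r} 1/(n_q − r' + 2) ≤ π²/6 + ε. -/
open MeasureTheory ProbabilityTheory Filter
open scoped ENNReal

/-
The summands are nonnegative for `r ≤ n_q + 1`, so we may extend the outer sum up to
`N = n_q + 1`. Writing `H` for the harmonic numbers, the inner sum then telescopes to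
`H N - H (N - r)`, so the double sum is `H N ^ 2 - ∑_{r=1}^N H (N - r) / r`. The convolution
`∑_{r=1}^N H (N - r) / r` grows by `2 H N / (N + 1)` from `N` to `N + 1` (partial fractions),
exactly like `H N ^ 2 - ∑_{k=1}^N 1 / k ^ 2`; hence the double sum equals
`∑_{k=1}^N 1 / k ^ 2 ≤ π ^ 2 / 6` for every `N`, and `N₀ = 0` works.
-/

open Finset

section HarmonicConvolution

variable {K : Type*} [Field K] [CharZero K]

lemma sum_Icc_one_div_reflect_eq_harmonic_sub {N r : ℕ} (h : r ≤ N) :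
    ∑ r' ∈ Icc 1 r, 1 / ((N : K) + 1 - r') = harmonic N - harmonic (N - r) := by
  induction r with
  | zero => simp
  | succ r ih =>
    obtain ⟨m, rfl⟩ : ∃ m, N = m + r + 1 := ⟨N - r - 1, by omega⟩
    rw [sum_Icc_succ_top (by omega), ih (by omega), show m + r + 1 - r = m + 1 by omega,
      show m + r + 1 - (r + 1) = m by omega, harmonic_succ m]
    push_cast
    ring

lemma sum_Icc_one_div_reflect_eq_harmonic (N : ℕ) :
    ∑ r ∈ Icc 1 N, 1 / ((N : K) + 1 - r) = harmonic N := by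
  simpa using sum_Icc_one_div_reflect_eq_harmonic_sub (K := K) le_rfl

lemma sum_Icc_one_div_mul_one_div_reflect (N : ℕ) :
    ∑ r ∈ Icc 1 N, 1 / (r : K) * (1 / ((N : K) + 1 - r)) = 2 * harmonic N / (N + 1) := by
  have partial_fractions : ∀ r ∈ Icc 1 N,
      1 / (r : K) * (1 / ((N : K) + 1 - r)) = (1 / (r : K) + 1 / ((N : K) + 1 - r)) / (N + 1) := by
    intro r hr
    rw [mem_Icc] at hr
    have hr0 : (r : K) ≠ 0 := by exact_mod_cast (by omega : r ≠ 0)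
    have hNr : (N : K) + 1 - r ≠ 0 := by
      rw [← Nat.cast_add_one, ← Nat.cast_sub (by omega)]
      exact_mod_cast (by omega : N + 1 - r ≠ 0)
    have hN : (N : K) + 1 ≠ 0 := by exact_mod_cast N.succ_ne_zero
    field_simp
    ring
  rw [sum_congr rfl partial_fractions, ← sum_div, sum_add_distrib,
    sum_Icc_one_div_reflect_eq_harmonic, harmonic_eq_sum_Icc]
  push_cast
  simp only [one_div]
  ring

lemma sum_Icc_harmonic_sub_div_add_sum_Icc_one_div_sq (N : ℕ) :
    ∑ r ∈ Icc 1 N, (harmonic (N - r) : K) / r + ∑ k ∈ Icc 1 N, 1 / (k : K) ^ 2 =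
      harmonic N ^ 2 := by
  induction N with
  | zero => simp
  | succ N ih =>
    have harmonic_step : ∀ r ∈ Icc 1 N, (harmonic (N + 1 - r) : K) / r =
        harmonic (N - r) / r + 1 / (r : K) * (1 / ((N : K) + 1 - r)) := by
      intro r hr
      rw [mem_Icc] at hr
      rw [show N + 1 - r = N - r + 1 by omega, harmonic_succ]
      push_cast [Nat.cast_sub hr.2]
      ring
    rw [sum_Icc_succ_top (by omega), sum_Icc_succ_top (by omega), sum_congr rfl harmonic_step,
      sum_add_distrib, sum_Icc_one_div_mul_one_div_reflect, Nat.sub_self, harmonic_zero,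
      harmonic_succ]
    push_cast
    have hN : (N : K) + 1 ≠ 0 := by exact_mod_cast N.succ_ne_zero
    field_simp
    linear_combination (N + 1 : K) ^ 2 * ih

theorem sum_Icc_one_div_mul_sum_Icc_one_div_reflect (N : ℕ) :
    ∑ r ∈ Icc 1 N, 1 / (r : K) * ∑ r' ∈ Icc 1 r, 1 / ((N : K) + 1 - r') =
      ∑ k ∈ Icc 1 N, 1 / (k : K) ^ 2 := by
  have inner : ∀ r ∈ Icc 1 N, 1 / (r : K) * ∑ r' ∈ Icc 1 r, 1 / ((N : K) + 1 - r') =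
      harmonic N * (1 / (r : K)) - harmonic (N - r) / r := by
    intro r hr
    rw [sum_Icc_one_div_reflect_eq_harmonic_sub (mem_Icc.1 hr).2]
    ring
  have hH : ∑ r ∈ Icc 1 N, 1 / (r : K) = harmonic N := by
    simp [harmonic_eq_sum_Icc]
  rw [sum_congr rfl inner, sum_sub_distrib, ← mul_sum, hH]
  linear_combination -sum_Icc_harmonic_sub_div_add_sum_Icc_one_div_sq (K := K) N

end HarmonicConvolution

lemma sum_Icc_one_div_sq_le_pi_sq_div_six (M : ℕ) :
    ∑ k ∈ Icc 1 M, 1 / (k : ℝ) ^ 2 ≤ Real.pi ^ 2 / 6 :=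
  sum_le_hasSum _ (fun _ _ => by positivity) hasSum_zeta_two

/-- the double sum `Σ_{r=1}^{min(n_p,n_q)} (1/r) Σ_{r'=1}^{r}
1/(n_q − r' + 2)` is at most `π²/6 + ε` once `min(n_p, n_q)` is large enough. -/
theorem stmt18 :
    ∀ ε > (0 : ℝ), ∃ N₀ : ℕ, ∀ np nq : ℕ, 0 < np → 0 < nq → N₀ ≤ min np nq →
      ∑ r ∈ Finset.Icc 1 (min np nq), (1 / (r : ℝ)) *
          ∑ r' ∈ Finset.Icc 1 r, 1 / ((nq : ℝ) - (r' : ℝ) + 2) ≤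
        Real.pi ^ 2 / 6 + ε := by
  intro ε hε
  refine ⟨0, fun np nq _ _ _ => ?_⟩
  have term_nonneg : ∀ r ∈ Icc 1 (nq + 1),
      0 ≤ 1 / (r : ℝ) * ∑ r' ∈ Icc 1 r, 1 / ((nq : ℝ) - r' + 2) := by
    intro r hr
    refine mul_nonneg (by positivity) (sum_nonneg fun r' hr' => ?_)
    have : (r' : ℝ) ≤ nq + 1 := by exact_mod_cast (mem_Icc.1 hr').2.trans (mem_Icc.1 hr).2
    exact one_div_nonneg.2 (by linarith)
  calc ∑ r ∈ Icc 1 (min np nq), 1 / (r : ℝ) * ∑ r' ∈ Icc 1 r, 1 / ((nq : ℝ) - r' + 2)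
      ≤ ∑ r ∈ Icc 1 (nq + 1), 1 / (r : ℝ) * ∑ r' ∈ Icc 1 r, 1 / ((nq : ℝ) - r' + 2) :=
        sum_le_sum_of_subset_of_nonneg (Icc_subset_Icc_right (by omega))
          fun r hr _ => term_nonneg r hr
    _ = ∑ k ∈ Icc 1 (nq + 1), 1 / (k : ℝ) ^ 2 := by
        rw [← sum_Icc_one_div_mul_sum_Icc_one_div_reflect]
        push_cast
        ring_nf
    _ ≤ Real.pi ^ 2 / 6 + ε := by linarith [sum_Icc_one_div_sq_le_pi_sq_div_six (nq + 1)]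
end
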